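/- For dimensions 1 ≤ d ≤ 3, the function u ↦ K^{(2)}_{u,u}(0) = ∫_{ℝ^d}[K^{BTBM}_u(x)]² dx equals C_d u^{-d/4} for a constant C_d > 0, and in particular is strictly decreasing in u > 0. -/

import Mathlib

open MeasureTheory Real

/-- The standard `d`-dimensional Gaussian heat kernel with variance parameter `s`. -/
noncomputable def heatK (d : ℕ) (s : ℝ) (x : EuclideanSpace ℝ (Fin d)) : ℝ :=
  (2 * π * s) ^ (-(d : ℝ) / 2) * Real.exp (-‖x‖ ^ 2 / (2 * s))

/-- The Brownian-time Brownian motion density in dimension `d`. -/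
noncomputable def btbmK (d : ℕ) (t : ℝ) (x : EuclideanSpace ℝ (Fin d)) : ℝ :=
  2 * ∫ s in Set.Ioi (0 : ℝ),
    heatK d s x * ((2 * π * t) ^ (-(1 : ℝ) / 2) * Real.exp (-s ^ 2 / (2 * t)))

/-- The diagonal value at `0` of the `2`-Brownian-times Brownian motion density. -/
noncomputable def twoBtK (d : ℕ) (u v : ℝ) : ℝ :=
  4 * ∫ r₁ in Set.Ioi (0 : ℝ), ∫ r₂ in Set.Ioi (0 : ℝ),
    (2 * π * (r₁ + r₂)) ^ (-(d : ℝ) / 2) *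
      ((2 * π * u) ^ (-(1 : ℝ) / 2) * Real.exp (-r₁ ^ 2 / (2 * u))) *
      ((2 * π * v) ^ (-(1 : ℝ) / 2) * Real.exp (-r₂ ^ 2 / (2 * v)))

/-!
Squaring the subordination formula for `btbmK` and integrating out `x` first, the
Chapman–Kolmogorov identity `∫ heatK d s x * heatK d t x dx = heatK d (s + t) 0` turns
`∫ btbmK d u x * btbmK d v x dx` into `twoBtK d u v`. Fubini applies because
`heatK d (r₁ + r₂) 0 ≤ (2π)^(-d/2) r₁^(-d/4) r₂^(-d/4)`, integrable near the origin exactly when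
`d < 4`. The substitution `rᵢ = √a sᵢ` in both time variables gives
`twoBtK d (a u) (a v) = a^(-d/4) twoBtK d u v`, and `twoBtK d 1 1 > 0` as the integral of a
positive function, so the diagonal decays strictly like `u^(-d/4)` once `d ≥ 1`.
-/

open Set

lemma integrable_exp_neg_mul_sq_norm {V : Type*} [NormedAddCommGroup V] [InnerProductSpace ℝ V]
    [FiniteDimensional ℝ V] [MeasurableSpace V] [BorelSpace V] {b : ℝ} (hb : 0 < b) :
    Integrable (fun x : V => exp (-b * ‖x‖ ^ 2)) := by
  refine Integrable.of_integral_ne_zero ?_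
  rw [GaussianFourier.integral_rexp_neg_mul_sq_norm hb]
  positivity

lemma setIntegral_pos_of_pos {α : Type*} [MeasurableSpace α] {μ : Measure α} {s : Set α}
    {f : α → ℝ} (hs : MeasurableSet s) (hμs : μ s ≠ 0) (hf : ∀ x ∈ s, 0 < f x)
    (hfi : IntegrableOn f s μ) : 0 < ∫ x in s, f x ∂μ := by
  have hsupp : s ⊆ Function.support f := fun x hx => (hf x hx).ne'
  rw [setIntegral_pos_iff_support_of_nonneg_ae
    (ae_restrict_of_forall_mem hs fun x hx => (hf x hx).le) hfi, inter_eq_right.mpr hsupp]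
  exact pos_iff_ne_zero.mpr hμs

lemma integral_Ioi_Ioi_comp_mul_left {E : Type*} [NormedAddCommGroup E] [NormedSpace ℝ E]
    (F : ℝ → ℝ → E) {c : ℝ} (hc : 0 < c) :
    ∫ r₁ in Ioi 0, ∫ r₂ in Ioi 0, F r₁ r₂
      = c ^ 2 • ∫ s₁ in Ioi 0, ∫ s₂ in Ioi 0, F (c * s₁) (c * s₂) := by
  have h (G : ℝ → E) : ∫ r in Ioi 0, G r = c • ∫ s in Ioi 0, G (c * s) := by
    rw [integral_comp_mul_left_Ioi' G 0 hc, mul_zero]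
  calc ∫ r₁ in Ioi 0, ∫ r₂ in Ioi 0, F r₁ r₂
      = ∫ r₁ in Ioi 0, c • ∫ s₂ in Ioi 0, F r₁ (c * s₂) := by
        congr 1; funext r₁; exact h _
    _ = c ^ 2 • ∫ s₁ in Ioi 0, ∫ s₂ in Ioi 0, F (c * s₁) (c * s₂) := by
        rw [integral_smul, h, smul_smul, sq]

lemma heatK_zero (d : ℕ) (s : ℝ) : heatK d s 0 = (2 * π * s) ^ (-(d : ℝ) / 2) := by
  simp [heatK]

lemma heatK_nonneg (d : ℕ) {s : ℝ} (hs : 0 ≤ s) (x : EuclideanSpace ℝ (Fin d)) :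
    0 ≤ heatK d s x := by
  unfold heatK; positivity

lemma heatK_pos (d : ℕ) {s : ℝ} (hs : 0 < s) (x : EuclideanSpace ℝ (Fin d)) :
    0 < heatK d s x := by
  unfold heatK; positivity

lemma heatK_mul_heatK (d : ℕ) {s t : ℝ} (hs : s ≠ 0) (ht : t ≠ 0)
    (x : EuclideanSpace ℝ (Fin d)) :
    heatK d s x * heatK d t x
      = heatK d s 0 * heatK d t 0 * exp (-((s + t) / (2 * s * t)) * ‖x‖ ^ 2) := by
  simp only [heatK_zero]
  unfold heatK
  rw [mul_mul_mul_comm, ← exp_add]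
  congr 2
  field_simp
  ring

lemma integrable_heatK_mul_heatK (d : ℕ) {s t : ℝ} (hs : 0 < s) (ht : 0 < t) :
    Integrable (fun x : EuclideanSpace ℝ (Fin d) => heatK d s x * heatK d t x) := by
  rw [funext (heatK_mul_heatK d hs.ne' ht.ne')]
  exact (integrable_exp_neg_mul_sq_norm (by positivity)).const_mul _

lemma integral_heatK_mul_heatK (d : ℕ) {s t : ℝ} (hs : 0 < s) (ht : 0 < t) :
    ∫ x : EuclideanSpace ℝ (Fin d), heatK d s x * heatK d t x = heatK d (s + t) 0 := by
  rw [funext (heatK_mul_heatK d hs.ne' ht.ne'), integral_const_mul,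
    GaussianFourier.integral_rexp_neg_mul_sq_norm (by positivity), finrank_euclideanSpace_fin]
  simp only [heatK_zero]
  rw [neg_div, rpow_neg (by positivity), rpow_neg (by positivity), rpow_neg (by positivity),
    ← inv_rpow (by positivity), ← inv_rpow (by positivity), ← inv_rpow (by positivity),
    ← mul_rpow (by positivity) (by positivity), ← mul_rpow (by positivity) (by positivity)]
  congr 1
  field_simp

lemma heatK_add_zero_le (d : ℕ) {s t : ℝ} (hs : 0 < s) (ht : 0 < t) :
    heatK d (s + t) 0 ≤ (2 * π) ^ (-(d : ℝ) / 2) * (s ^ (-(d : ℝ) / 4) * t ^ (-(d : ℝ) / 4)) := by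
  have he : -(d : ℝ) / 4 ≤ 0 := by have : (0 : ℝ) ≤ d := d.cast_nonneg; linarith
  have hst : (s + t) ^ (-(d : ℝ) / 2) = (s + t) ^ (-(d : ℝ) / 4) * (s + t) ^ (-(d : ℝ) / 4) := by
    rw [← rpow_add (by positivity)]; ring_nf
  rw [heatK_zero, mul_rpow (by positivity) (by positivity), hst]
  have hs' : (s + t) ^ (-(d : ℝ) / 4) ≤ s ^ (-(d : ℝ) / 4) :=
    rpow_le_rpow_of_nonpos hs (by linarith) he
  have ht' : (s + t) ^ (-(d : ℝ) / 4) ≤ t ^ (-(d : ℝ) / 4) :=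
    rpow_le_rpow_of_nonpos ht (by linarith) he
  gcongr

lemma heatK_sqrt_mul_zero (d : ℕ) {a s : ℝ} (ha : 0 ≤ a) (hs : 0 ≤ s) :
    heatK d (√a * s) 0 = a ^ (-(d : ℝ) / 4) * heatK d s 0 := by
  rw [heatK_zero, heatK_zero, mul_left_comm, mul_rpow (sqrt_nonneg a) (by positivity),
    sqrt_eq_rpow, ← rpow_mul ha]
  ring_nf

noncomputable def gaussKernel (u r : ℝ) : ℝ := (2 * π * u) ^ (-(1 : ℝ) / 2) * exp (-r ^ 2 / (2 * u))

lemma gaussKernel_pos {u : ℝ} (hu : 0 < u) (r : ℝ) : 0 < gaussKernel u r := by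
  unfold gaussKernel; positivity

lemma integrableOn_rpow_mul_gaussKernel {c u : ℝ} (hc : -1 < c) (hu : 0 < u) :
    IntegrableOn (fun r => r ^ c * gaussKernel u r) (Ioi 0) := by
  have h := (integrableOn_rpow_mul_exp_neg_mul_sq (b := (2 * u)⁻¹) (by positivity) hc).const_mul
    ((2 * π * u) ^ (-(1 : ℝ) / 2))
  refine IntegrableOn.congr_fun h (fun r _ => ?_) measurableSet_Ioi
  rw [gaussKernel, show -r ^ 2 / (2 * u) = -(2 * u)⁻¹ * r ^ 2 by ring, mul_left_comm]

lemma gaussKernel_mul_sqrt {a u : ℝ} (ha : 0 < a) (hu : 0 ≤ u) (r : ℝ) :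
    gaussKernel (a * u) (√a * r) = a ^ (-(1 : ℝ) / 2) * gaussKernel u r := by
  have hexp : -(√a * r) ^ 2 / (2 * (a * u)) = -r ^ 2 / (2 * u) := by
    rw [mul_pow, sq_sqrt ha.le]
    field_simp
  rw [gaussKernel, gaussKernel, hexp, mul_left_comm, mul_rpow ha.le (by positivity), mul_assoc]

noncomputable def btbmIntegrand (d : ℕ) (t s : ℝ) (x : EuclideanSpace ℝ (Fin d)) : ℝ :=
  heatK d s x * gaussKernel t s

lemma btbmK_eq (d : ℕ) (t : ℝ) (x : EuclideanSpace ℝ (Fin d)) :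
    btbmK d t x = 2 * ∫ s in Ioi 0, btbmIntegrand d t s x := rfl

noncomputable def twoBtIntegrand (d : ℕ) (u v : ℝ) (p : ℝ × ℝ) : ℝ :=
  heatK d (p.1 + p.2) 0 * gaussKernel u p.1 * gaussKernel v p.2

lemma twoBtK_eq_iteratedIntegral (d : ℕ) (u v : ℝ) :
    twoBtK d u v = 4 * ∫ r₁ in Ioi 0, ∫ r₂ in Ioi 0, twoBtIntegrand d u v (r₁, r₂) := by
  simp only [twoBtIntegrand, heatK_zero, gaussKernel]
  rfl

lemma twoBtIntegrand_pos (d : ℕ) {u v : ℝ} (hu : 0 < u) (hv : 0 < v) {p : ℝ × ℝ}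
    (hp : p ∈ Ioi 0 ×ˢ Ioi 0) : 0 < twoBtIntegrand d u v p := by
  have := heatK_pos d (add_pos hp.1 hp.2) 0
  have := gaussKernel_pos hu p.1
  have := gaussKernel_pos hv p.2
  unfold twoBtIntegrand; positivity

lemma integrableOn_twoBtIntegrand {d : ℕ} (hd : d ≤ 3) {u v : ℝ} (hu : 0 < u) (hv : 0 < v) :
    IntegrableOn (twoBtIntegrand d u v) (Ioi 0 ×ˢ Ioi 0) := by
  have hc : -1 < -(d : ℝ) / 4 := by
    have : (d : ℝ) ≤ 3 := by exact_mod_cast hd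
    linarith
  have hbound : IntegrableOn (fun p : ℝ × ℝ => (2 * π) ^ (-(d : ℝ) / 2) *
      ((p.1 ^ (-(d : ℝ) / 4) * gaussKernel u p.1) * (p.2 ^ (-(d : ℝ) / 4) * gaussKernel v p.2)))
      (Ioi 0 ×ˢ Ioi 0) := by
    rw [IntegrableOn, Measure.volume_eq_prod, ← Measure.prod_restrict]
    exact (((integrableOn_rpow_mul_gaussKernel hc hu).mul_prod
      (integrableOn_rpow_mul_gaussKernel hc hv))).const_mul _
  refine hbound.mono' (by unfold twoBtIntegrand gaussKernel heatK; fun_prop) ?_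
  filter_upwards [ae_restrict_mem (measurableSet_Ioi.prod measurableSet_Ioi)] with p hp
  rw [norm_of_nonneg (twoBtIntegrand_pos d hu hv hp).le]
  have := gaussKernel_pos hu p.1
  have := gaussKernel_pos hv p.2
  calc twoBtIntegrand d u v p
        = heatK d (p.1 + p.2) 0 * (gaussKernel u p.1 * gaussKernel v p.2) := by
        unfold twoBtIntegrand; ring
    _ ≤ (2 * π) ^ (-(d : ℝ) / 2) * (p.1 ^ (-(d : ℝ) / 4) * p.2 ^ (-(d : ℝ) / 4)) *
        (gaussKernel u p.1 * gaussKernel v p.2) := by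
        gcongr; exact heatK_add_zero_le d hp.1 hp.2
    _ = _ := by ring

lemma twoBtK_eq_setIntegral {d : ℕ} (hd : d ≤ 3) {u v : ℝ} (hu : 0 < u) (hv : 0 < v) :
    twoBtK d u v = 4 * ∫ p in Ioi 0 ×ˢ Ioi 0, twoBtIntegrand d u v p := by
  rw [twoBtK_eq_iteratedIntegral, Measure.volume_eq_prod,
    setIntegral_prod _ (integrableOn_twoBtIntegrand hd hu hv)]

lemma twoBtK_pos {d : ℕ} (hd : d ≤ 3) {u v : ℝ} (hu : 0 < u) (hv : 0 < v) : 0 < twoBtK d u v := by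
  have hQ : volume (Ioi (0 : ℝ) ×ˢ Ioi (0 : ℝ)) ≠ 0 := by
    simp [Measure.volume_eq_prod, Measure.prod_prod]
  rw [twoBtK_eq_setIntegral hd hu hv]
  exact mul_pos four_pos (setIntegral_pos_of_pos (measurableSet_Ioi.prod measurableSet_Ioi) hQ
    (fun p hp => twoBtIntegrand_pos d hu hv hp) (integrableOn_twoBtIntegrand hd hu hv))

lemma integral_btbmIntegrand_mul (d : ℕ) (u v : ℝ) {p : ℝ × ℝ} (hp : p ∈ Ioi 0 ×ˢ Ioi 0) :
    ∫ x, btbmIntegrand d u p.1 x * btbmIntegrand d v p.2 x = twoBtIntegrand d u v p := by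
  simp only [btbmIntegrand, mul_mul_mul_comm _ (gaussKernel u p.1)]
  rw [integral_mul_const, integral_heatK_mul_heatK d hp.1 hp.2, twoBtIntegrand, mul_assoc]

lemma btbmK_mul_btbmK (d : ℕ) (u v : ℝ) (x : EuclideanSpace ℝ (Fin d)) :
    btbmK d u x * btbmK d v x
      = 4 * ∫ p in Ioi 0 ×ˢ Ioi 0, btbmIntegrand d u p.1 x * btbmIntegrand d v p.2 x := by
  rw [btbmK_eq, btbmK_eq, Measure.volume_eq_prod,
    setIntegral_prod_mul (fun s => btbmIntegrand d u s x) fun s => btbmIntegrand d v s x]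
  ring

lemma integrable_btbmIntegrand_mul {d : ℕ} (hd : d ≤ 3) {u v : ℝ} (hu : 0 < u) (hv : 0 < v) :
    Integrable (Function.uncurry fun (p : ℝ × ℝ) (x : EuclideanSpace ℝ (Fin d)) =>
      btbmIntegrand d u p.1 x * btbmIntegrand d v p.2 x)
      ((volume.restrict (Ioi 0 ×ˢ Ioi 0)).prod volume) := by
  have hQ : MeasurableSet (Ioi (0 : ℝ) ×ˢ Ioi (0 : ℝ)) := measurableSet_Ioi.prod measurableSet_Ioi
  have hnonneg : ∀ p ∈ Ioi (0 : ℝ) ×ˢ Ioi (0 : ℝ), ∀ x,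
      0 ≤ btbmIntegrand d u p.1 x * btbmIntegrand d v p.2 x := fun p hp x =>
    mul_nonneg (mul_nonneg (heatK_nonneg d hp.1.le x) (gaussKernel_pos hu _).le)
      (mul_nonneg (heatK_nonneg d hp.2.le x) (gaussKernel_pos hv _).le)
  rw [integrable_prod_iff (by unfold btbmIntegrand heatK gaussKernel; fun_prop)]
  constructor
  · filter_upwards [ae_restrict_mem hQ] with p hp
    simpa only [Function.uncurry_apply_pair, btbmIntegrand,
      mul_mul_mul_comm _ (gaussKernel u p.1)] using
      (integrable_heatK_mul_heatK d hp.1 hp.2).mul_const _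
  · refine (integrableOn_twoBtIntegrand hd hu hv).congr_fun (fun p hp => ?_) hQ
    simp only [Function.uncurry_apply_pair]
    rw [← integral_btbmIntegrand_mul d u v hp]
    exact integral_congr_ae (ae_of_all _ fun x => (norm_of_nonneg (hnonneg p hp x)).symm)

lemma twoBtK_eq_integral_btbmK_mul {d : ℕ} (hd : d ≤ 3) {u v : ℝ} (hu : 0 < u) (hv : 0 < v) :
    twoBtK d u v = ∫ x, btbmK d u x * btbmK d v x := by
  simp_rw [btbmK_mul_btbmK, integral_const_mul]
  rw [← integral_integral_swap (integrable_btbmIntegrand_mul hd hu hv),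
    twoBtK_eq_setIntegral hd hu hv]
  congr 1
  exact setIntegral_congr_fun (measurableSet_Ioi.prod measurableSet_Ioi)
    fun p hp => (integral_btbmIntegrand_mul d u v hp).symm

lemma twoBtIntegrand_sqrt_mul (d : ℕ) {a u v : ℝ} (ha : 0 < a) (hu : 0 ≤ u) (hv : 0 ≤ v)
    {s₁ s₂ : ℝ} (hs₁ : 0 ≤ s₁) (hs₂ : 0 ≤ s₂) :
    twoBtIntegrand d (a * u) (a * v) (√a * s₁, √a * s₂)
      = a⁻¹ * (a ^ (-(d : ℝ) / 4) * twoBtIntegrand d u v (s₁, s₂)) := by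
  have hinv : a ^ (-(1 : ℝ) / 2) * a ^ (-(1 : ℝ) / 2) = a⁻¹ := by
    rw [← rpow_add ha]; norm_num [rpow_neg_one]
  simp only [twoBtIntegrand]
  rw [← mul_add, heatK_sqrt_mul_zero d ha.le (add_nonneg hs₁ hs₂), gaussKernel_mul_sqrt ha hu,
    gaussKernel_mul_sqrt ha hv, ← hinv]
  ring

lemma twoBtK_mul_mul (d : ℕ) {a u v : ℝ} (ha : 0 < a) (hu : 0 ≤ u) (hv : 0 ≤ v) :
    twoBtK d (a * u) (a * v) = a ^ (-(d : ℝ) / 4) * twoBtK d u v := by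
  have hscaled : ∫ s₁ in Ioi 0, ∫ s₂ in Ioi 0,
        twoBtIntegrand d (a * u) (a * v) (√a * s₁, √a * s₂)
      = a⁻¹ * (a ^ (-(d : ℝ) / 4) *
          ∫ s₁ in Ioi 0, ∫ s₂ in Ioi 0, twoBtIntegrand d u v (s₁, s₂)) := by
    simp only [← integral_const_mul]
    refine setIntegral_congr_fun measurableSet_Ioi fun s₁ hs₁ => ?_
    refine setIntegral_congr_fun measurableSet_Ioi fun s₂ hs₂ => ?_
    exact twoBtIntegrand_sqrt_mul d ha hu hv (le_of_lt hs₁) (le_of_lt hs₂)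
  rw [twoBtK_eq_iteratedIntegral, integral_Ioi_Ioi_comp_mul_left _ (sqrt_pos.mpr ha),
    smul_eq_mul, hscaled, sq_sqrt ha.le, twoBtK_eq_iteratedIntegral]
  field_simp

theorem twoBtK_diagonal_strictAnti (d : ℕ) (hd1 : 1 ≤ d) (hd3 : d ≤ 3) :
    ∃ C > (0 : ℝ),
      (∀ u > (0 : ℝ),
        twoBtK d u u = ∫ x : EuclideanSpace ℝ (Fin d), (btbmK d u x) ^ 2 ∧
        twoBtK d u u = C * u ^ (-(d : ℝ) / 4)) ∧
      StrictAntiOn (fun u => twoBtK d u u) (Set.Ioi (0 : ℝ)) := by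
  have hC : 0 < twoBtK d 1 1 := twoBtK_pos hd3 one_pos one_pos
  have hscale (u : ℝ) (hu : 0 < u) : twoBtK d u u = twoBtK d 1 1 * u ^ (-(d : ℝ) / 4) := by
    simpa [mul_comm] using twoBtK_mul_mul d hu zero_le_one zero_le_one
  refine ⟨twoBtK d 1 1, hC, fun u hu => ⟨?_, hscale u hu⟩, fun u hu v hv huv => ?_⟩
  · simp_rw [sq, twoBtK_eq_integral_btbmK_mul hd3 hu hu]
  · have hexp : -(d : ℝ) / 4 < 0 := by
      have : (1 : ℝ) ≤ d := by exact_mod_cast hd1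
      linarith
    simp only [hscale u hu, hscale v hv]
    exact mul_lt_mul_of_pos_left (rpow_lt_rpow_of_neg hu huv hexp) hC
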